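/- arXiv:math/0412346 — 4 statements merged into one kernel-verified Lean document; each statement's English description precedes it below -/
import Mathlib

section
/- Let $F$ be a real random variable with $E[F]=0$ and suppose $E[F e^{sF}] \le h(s)\, E[e^{sF}]$ for all $s\in[0,t_0)$, where $h$ is nonnegative, measurable and locally integrable on $[0,t_0)$, and $E[e^{sF}]<\infty$ for $s\in[0,t_0)$. Then for every $t\in(0,t_0)$ and $x>0$, $P(F\ge x)\le \exp\left(-tx + \int_0^t h(s)\,ds\right)$. -/
/-!
Write `L(s) = E[e^{sF}]`. On `(0, t)` one has `L' = E[F e^{sF}] ≤ h L`, so `(log L)' ≤ h`, and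
since `L(0) = 1` this integrates to `L(t) ≤ exp ∫₀ᵗ h`. The Chernoff bound
`P(F ≥ x) ≤ e^{-tx} L(t)` then gives the claim.
-/

open MeasureTheory ProbabilityTheory Real Set

theorem log_sub_log_le_integral_of_hasDerivAt_le_mul {L L' h : ℝ → ℝ} {a b : ℝ} (hab : a ≤ b)
    (hcont : ContinuousOn L (Icc a b)) (hpos : ∀ s ∈ Icc a b, 0 < L s)
    (hderiv : ∀ s ∈ Ioo a b, HasDerivAt L (L' s) s) (hh : IntegrableOn h (Icc a b))
    (hle : ∀ s ∈ Ioo a b, L' s ≤ h s * L s) :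
    log (L b) - log (L a) ≤ ∫ s in a..b, h s := by
  refine intervalIntegral.sub_le_integral_of_hasDeriv_right_of_le hab
    (hcont.log fun s hs ↦ (hpos s hs).ne') (fun s hs ↦ ?_) hh
    (fun s hs ↦ (div_le_iff₀ (hpos s (Ioo_subset_Icc_self hs))).2 (hle s hs))
  exact ((hderiv s hs).log (hpos s (Ioo_subset_Icc_self hs)).ne').hasDerivWithinAt

lemma Real.exp_mul_le_exp_mul_add_exp_mul {a b s y : ℝ} (has : a ≤ s) (hsb : s ≤ b) :
    exp (s * y) ≤ exp (a * y) + exp (b * y) := by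
  rcases le_total 0 y with hy | hy
  · calc exp (s * y) ≤ exp (b * y) := exp_le_exp.2 (mul_le_mul_of_nonneg_right hsb hy)
      _ ≤ _ := le_add_of_nonneg_left (exp_pos _).le
  · calc exp (s * y) ≤ exp (a * y) := exp_le_exp.2 (mul_le_mul_of_nonpos_right has hy)
      _ ≤ _ := le_add_of_nonneg_right (exp_pos _).le

namespace ProbabilityTheory

variable {Ω : Type*} [MeasurableSpace Ω] {μ : Measure Ω} {X : Ω → ℝ}

lemma continuousOn_mgf_Icc {a b : ℝ} (ha : Integrable (fun ω ↦ exp (a * X ω)) μ)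
    (hb : Integrable (fun ω ↦ exp (b * X ω)) μ) : ContinuousOn (mgf X μ) (Icc a b) := by
  refine continuousOn_of_dominated (bound := fun ω ↦ exp (a * X ω) + exp (b * X ω))
    (fun s hs ↦ (integrable_exp_mul_of_le_of_le ha hb hs.1 hs.2).aestronglyMeasurable)
    (fun s hs ↦ ae_of_all _ fun ω ↦ ?_) (ha.add hb) (ae_of_all _ fun ω ↦ by fun_prop)
  rw [norm_of_nonneg (exp_pos _).le]
  exact exp_mul_le_exp_mul_add_exp_mul hs.1 hs.2

lemma mgf_le_exp_integral_of_deriv_le [IsProbabilityMeasure μ] {h : ℝ → ℝ} {t : ℝ} (ht : 0 ≤ t)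
    (hint : Integrable (fun ω ↦ exp (t * X ω)) μ) (hh : IntegrableOn h (Icc 0 t))
    (hle : ∀ s ∈ Ioo 0 t, μ[fun ω ↦ X ω * exp (s * X ω)] ≤ h s * mgf X μ s) :
    mgf X μ t ≤ exp (∫ s in 0..t, h s) := by
  have hint_Icc : ∀ s ∈ Icc 0 t, Integrable (fun ω ↦ exp (s * X ω)) μ :=
    fun s hs ↦ integrable_exp_mul_of_nonneg_of_le hint hs.1 hs.2
  have hinterior : Ioo 0 t ⊆ interior (integrableExpSet X μ) :=
    interior_maximal (Ioo_subset_Icc_self.trans hint_Icc) isOpen_Ioo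
  have hlog := log_sub_log_le_integral_of_hasDerivAt_le_mul ht
    (continuousOn_mgf_Icc (hint_Icc 0 ⟨le_rfl, ht⟩) hint) (fun s hs ↦ mgf_pos (hint_Icc s hs))
    (fun s hs ↦ hasDerivAt_mgf (hinterior hs)) hh hle
  rw [mgf_zero, log_one, sub_zero] at hlog
  exact (log_le_iff_le_exp (mgf_pos hint)).1 hlog

end ProbabilityTheory

theorem stmt1_general {Ω : Type*} [MeasurableSpace Ω] (μ : Measure Ω) [IsProbabilityMeasure μ]
    (F : Ω → ℝ) (t0 : ℝ) (h : ℝ → ℝ)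
    (hloc : ∀ t ∈ Set.Ico (0:ℝ) t0, IntervalIntegrable h volume 0 t)
    (hexp : ∀ s ∈ Set.Ico (0:ℝ) t0, Integrable (fun ω => Real.exp (s * F ω)) μ)
    (hineq : ∀ s ∈ Set.Ico (0:ℝ) t0,
      ∫ ω, F ω * Real.exp (s * F ω) ∂μ ≤ h s * ∫ ω, Real.exp (s * F ω) ∂μ) :
    ∀ t ∈ Set.Ioo (0:ℝ) t0, ∀ x > (0:ℝ),
      (μ {ω | x ≤ F ω}).toReal ≤ Real.exp (-(t * x) + ∫ s in (0:ℝ)..t, h s) := by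
  intro t ⟨ht0, htt0⟩ x _
  have ht : t ∈ Set.Ico 0 t0 := ⟨ht0.le, htt0⟩
  have hh : IntegrableOn h (Set.Icc 0 t) :=
    (integrableOn_Icc_iff_integrableOn_Ioc).2 (hloc t ht).1
  have hmgf : mgf F μ t ≤ exp (∫ s in (0:ℝ)..t, h s) :=
    mgf_le_exp_integral_of_deriv_le ht0.le (hexp t ht) hh
      fun s hs ↦ hineq s ⟨hs.1.le, hs.2.trans htt0⟩
  calc μ.real {ω | x ≤ F ω} ≤ exp (-t * x) * mgf F μ t :=
        measure_ge_le_exp_mul_mgf x ht0.le (hexp t ht)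
    _ ≤ exp (-t * x) * exp (∫ s in (0:ℝ)..t, h s) := by gcongr
    _ = exp (-(t * x) + ∫ s in (0:ℝ)..t, h s) := by rw [← exp_add, neg_mul]

/-- Chernoff bound from the differential inequality `E[F e^{sF}] ≤ h(s) E[e^{sF}]`. -/
theorem stmt1 {Ω : Type*} [MeasurableSpace Ω] (μ : Measure Ω) [IsProbabilityMeasure μ]
    (F : Ω → ℝ) (t0 : ℝ) (h : ℝ → ℝ)
    (hF : Integrable F μ) (hmean : ∫ ω, F ω ∂μ = 0)
    (hnn : ∀ s ∈ Set.Ico (0:ℝ) t0, 0 ≤ h s)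
    (hmeas : Measurable h)
    (hloc : ∀ t ∈ Set.Ico (0:ℝ) t0, IntervalIntegrable h volume 0 t)
    (hexp : ∀ s ∈ Set.Ico (0:ℝ) t0, Integrable (fun ω => Real.exp (s * F ω)) μ)
    (hexp' : ∀ s ∈ Set.Ico (0:ℝ) t0, Integrable (fun ω => F ω * Real.exp (s * F ω)) μ)
    (hineq : ∀ s ∈ Set.Ico (0:ℝ) t0,
      ∫ ω, F ω * Real.exp (s * F ω) ∂μ ≤ h s * ∫ ω, Real.exp (s * F ω) ∂μ) :
    ∀ t ∈ Set.Ioo (0:ℝ) t0, ∀ x > (0:ℝ),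
      (μ {ω | x ≤ F ω}).toReal ≤ Real.exp (-(t * x) + ∫ s in (0:ℝ)..t, h s) :=
  stmt1_general μ F t0 h hloc hexp hineq
end

section
/- For all real numbers $0<u<v$ and all $x>0$, $\dfrac{e^{ux}-1}{e^{vx}-1} \le \dfrac{u}{v}\, e^{(u-v)x/2}$. -/
/-!
Since `exp s - 1 = 2 exp (s / 2) sinh (s / 2)`, the claim reduces to
`sinh (u x / 2) ≤ (u / v) sinh (v x / 2)`. This is the chord inequality `f (t y) ≤ t f y`,
`t = u / v ∈ (0, 1]`, for `f = sinh`, which is convex on `[0, ∞)` and vanishes at `0`.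
-/

open Real Set

theorem ConvexOn.map_smul_le_of_map_zero {𝕜 E β : Type*} [Ring 𝕜] [PartialOrder 𝕜]
    [AddCommMonoid E] [AddCommMonoid β] [PartialOrder β] [Module 𝕜 E] [Module 𝕜 β]
    [IsOrderedRing 𝕜] {s : Set E} {f : E → β} (hf : ConvexOn 𝕜 s f) (h₀ : (0 : E) ∈ s)
    (hf₀ : f 0 = 0) {x : E} (hx : x ∈ s) {t : 𝕜} (ht₀ : 0 ≤ t) (ht₁ : t ≤ 1) :
    f (t • x) ≤ t • f x := by
  simpa [hf₀] using hf.2 hx h₀ ht₀ (sub_nonneg.2 ht₁) (add_sub_cancel t 1)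

theorem Real.convexOn_sinh : ConvexOn ℝ (Ici 0) sinh := by
  refine MonotoneOn.convexOn_of_deriv (convex_Ici 0) continuous_sinh.continuousOn
    differentiable_sinh.differentiableOn ?_
  rw [deriv_sinh, interior_Ici]
  exact fun a ha b hb hab ↦ cosh_le_cosh.2 (by rwa [abs_of_pos ha, abs_of_pos hb])

theorem Real.sinh_mul_le_div_mul_sinh_mul {u v a : ℝ} (hu : 0 ≤ u) (huv : u ≤ v) (ha : 0 ≤ a) :
    sinh (u * a) ≤ u / v * sinh (v * a) := by
  obtain rfl | hv := (hu.trans huv).eq_or_lt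
  · simp [le_antisymm huv hu]
  have h := convexOn_sinh.map_smul_le_of_map_zero self_mem_Ici sinh_zero
    (mem_Ici.2 (mul_nonneg hv.le ha)) (div_nonneg hu hv.le) ((div_le_one hv).2 huv)
  rwa [smul_eq_mul, smul_eq_mul, show u / v * (v * a) = u * a by field_simp] at h

theorem Real.exp_sub_one_eq_two_mul_exp_half_mul_sinh_half (s : ℝ) :
    exp s - 1 = 2 * exp (s / 2) * sinh (s / 2) := by
  have : exp s = exp (s / 2) * exp (s / 2) := by rw [← exp_add, add_halves]
  rw [sinh_eq, exp_neg, this]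
  field_simp

/-- Elementary exponential inequality. -/
theorem stmt3 (u v x : ℝ) (hu : 0 < u) (huv : u < v) (hx : 0 < x) :
    (Real.exp (u * x) - 1) / (Real.exp (v * x) - 1)
      ≤ u / v * Real.exp ((u - v) * x / 2) := by
  have hsinh : 0 < sinh (v * x / 2) := sinh_pos_iff.2 (by have := hu.trans huv; positivity)
  have hexp : exp ((u - v) * x / 2) * exp (v * x / 2) = exp (u * x / 2) := by
    rw [← exp_add]; ring_nf
  rw [exp_sub_one_eq_two_mul_exp_half_mul_sinh_half, exp_sub_one_eq_two_mul_exp_half_mul_sinh_half,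
    div_le_iff₀ (by positivity)]
  calc 2 * exp (u * x / 2) * sinh (u * x / 2)
      ≤ 2 * exp (u * x / 2) * (u / v * sinh (v * x / 2)) := by
        simp only [mul_div_assoc]
        gcongr
        exact sinh_mul_le_div_mul_sinh_mul hu.le huv.le (half_pos hx).le
    _ = u / v * exp ((u - v) * x / 2) * (2 * exp (v * x / 2) * sinh (v * x / 2)) := by
        rw [← hexp]; ring
end

section
/- Let $a>0$ and $V>0$. For all $x>0$: $-\frac{x}{a}+\frac{2V}{a^2}\log\left(1+\frac{a x}{2V}\right) \le -\left(1-\frac{\log 3}{2}\right)\min\left(\frac{x}{a},\frac{x^2}{4V}\right)$. -/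
/-!
With `u = a x / (2V)` and `k = 2V / a²` the left side is `-k (u - log (1 + u))` and the minimum is
`k · min u (u² / 2)`, so everything reduces to `c · min u (u² / 2) ≤ u - log (1 + u)` with
`c = 1 - log 3 / 2`. The constant is chosen so that both branches are tight at `u = 2`.
For `u ≥ 2` this is concavity of `log` (the chord from `1` to `1 + u` lies below it at `3`).
For `u ≤ 2` the difference `u - log (1 + u) - c u² / 2` vanishes at `0` and `2`, and its derivative
`t (1 - c - c t) / (1 + t)` is first nonnegative, then nonpositive.
-/

open Real Set

theorem min_le_of_hasDerivAt_nonneg_of_nonpos {f f' : ℝ → ℝ} {a b m x : ℝ}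
    (hf : ∀ t ∈ Icc a b, HasDerivAt f (f' t) t) (h_inc : ∀ t ∈ Ioo a b, t < m → 0 ≤ f' t)
    (h_dec : ∀ t ∈ Ioo a b, m < t → f' t ≤ 0) (hx : x ∈ Icc a b) :
    min (f a) (f b) ≤ f x := by
  have hcont : ContinuousOn f (Icc a b) := fun t ht => (hf t ht).continuousAt.continuousWithinAt
  have hderiv : ∀ {s}, s ⊆ Icc a b → ∀ t ∈ interior s, HasDerivWithinAt f (f' t) (interior s) t :=
    fun hs t ht => (hf t (hs (interior_subset ht))).hasDerivWithinAt
  rcases le_or_gt x m with hxm | hmx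
  · have hsub : Icc a x ⊆ Icc a b := Icc_subset_Icc_right hx.2
    have hmono : MonotoneOn f (Icc a x) :=
      monotoneOn_of_hasDerivWithinAt_nonneg (convex_Icc a x) (hcont.mono hsub) (hderiv hsub)
        (fun t ht => by
          rw [interior_Icc] at ht
          exact h_inc t ⟨ht.1, ht.2.trans_le hx.2⟩ (ht.2.trans_le hxm))
    exact min_le_of_left_le (hmono (left_mem_Icc.2 hx.1) (right_mem_Icc.2 hx.1) hx.1)
  · have hsub : Icc x b ⊆ Icc a b := Icc_subset_Icc_left hx.1
    have hanti : AntitoneOn f (Icc x b) :=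
      antitoneOn_of_hasDerivWithinAt_nonpos (convex_Icc x b) (hcont.mono hsub) (hderiv hsub)
        (fun t ht => by
          rw [interior_Icc] at ht
          exact h_dec t ⟨hx.1.trans_lt ht.1, ht.2⟩ (hmx.trans ht.1))
    exact min_le_of_right_le (hanti (left_mem_Icc.2 hx.2) (right_mem_Icc.2 hx.2) hx.2)

theorem mul_log_one_add_le_mul_log_one_add {b u : ℝ} (hb : 0 < b) (hbu : b ≤ u) :
    b * log (1 + u) ≤ u * log (1 + b) := by
  have hu : 0 < u := hb.trans_le hbu
  have hchord := strictConcaveOn_log_Ioi.concaveOn.2 (mem_Ioi.2 one_pos)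
    (mem_Ioi.2 (by linarith : (0 : ℝ) < 1 + u)) (sub_nonneg.2 ((div_le_one hu).2 hbu))
    (div_nonneg hb.le hu.le) (sub_add_cancel 1 (b / u))
  have hpoint : (1 - b / u) • (1 : ℝ) + (b / u) • (1 + u) = 1 + b := by
    simp only [smul_eq_mul]; field_simp; ring
  rw [hpoint, log_one, smul_zero, zero_add, smul_eq_mul] at hchord
  rwa [div_mul_eq_mul_div, div_le_iff₀ hu, mul_comm (log (1 + b))] at hchord

theorem hasDerivAt_sub_log_one_add_sub_mul_sq (c : ℝ) {t : ℝ} (ht : -1 < t) :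
    HasDerivAt (fun s => s - log (1 + s) - c * s ^ 2 / 2) (t * (1 - c - c * t) / (1 + t)) t := by
  have hpos : 1 + t ≠ 0 := by linarith
  have hlog : HasDerivAt (fun s => log (1 + s)) (1 / (1 + t)) t := by
    simpa using ((hasDerivAt_id t).const_add 1).log hpos
  have hsq : HasDerivAt (fun s => c * s ^ 2 / 2) (c * t) t :=
    ((hasDerivAt_pow 2 t).const_mul c).div_const 2 |>.congr_deriv (by norm_num; ring)
  refine ((hasDerivAt_id' t).sub hlog).sub hsq |>.congr_deriv ?_
  field_simp
  ring

theorem mul_sq_div_two_le_sub_log_one_add {b c u : ℝ} (hc : 0 < c)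
    (hb : c * b ^ 2 / 2 ≤ b - log (1 + b)) (hu : u ∈ Icc 0 b) :
    c * u ^ 2 / 2 ≤ u - log (1 + u) := by
  set g : ℝ → ℝ := fun s => s - log (1 + s) - c * s ^ 2 / 2
  have hmin := min_le_of_hasDerivAt_nonneg_of_nonpos (f := g) (m := (1 - c) / c)
    (fun t ht => hasDerivAt_sub_log_one_add_sub_mul_sq c (by linarith [ht.1]))
    (fun t ht htm => by
      have : c * t ≤ 1 - c := by rw [lt_div_iff₀' hc] at htm; linarith
      exact div_nonneg (mul_nonneg ht.1.le (by linarith)) (by linarith [ht.1]))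
    (fun t ht hmt => by
      have : 1 - c ≤ c * t := by rw [div_lt_iff₀' hc] at hmt; linarith
      exact div_nonpos_of_nonpos_of_nonneg
        (mul_nonpos_of_nonneg_of_nonpos ht.1.le (by linarith)) (by linarith [ht.1]))
    hu
  have hgu : 0 ≤ g u := (le_min (by simp [g]) (by simp only [g]; linarith)).trans hmin
  simp only [g] at hgu
  linarith

theorem log_three_lt_two : log 3 < 2 := by
  rw [log_lt_iff_lt_exp three_pos]
  linarith [add_one_lt_exp (two_ne_zero : (2 : ℝ) ≠ 0)]

theorem mul_min_le_sub_log_one_add {u : ℝ} (hu : 0 ≤ u) :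
    (1 - log 3 / 2) * min u (u ^ 2 / 2) ≤ u - log (1 + u) := by
  rcases le_total u 2 with hu2 | hu2
  · rw [min_eq_right (by nlinarith), ← mul_div_assoc]
    refine mul_sq_div_two_le_sub_log_one_add (by linarith [log_three_lt_two]) ?_ ⟨hu, hu2⟩
    norm_num
    linarith
  · rw [min_eq_left (by nlinarith)]
    have := mul_log_one_add_le_mul_log_one_add two_pos hu2
    norm_num at this
    linarith

/-- Comparison of the Bennett-type exponent to a Bernstein-type exponent. -/
theorem stmt7 (a V x : ℝ) (ha : 0 < a) (hV : 0 < V) (hx : 0 < x) :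
    -(x / a) + 2 * V / a ^ 2 * Real.log (1 + a * x / (2 * V))
      ≤ -((1 - Real.log 3 / 2) * min (x / a) (x ^ 2 / (4 * V))) := by
  set u := a * x / (2 * V)
  set k := 2 * V / a ^ 2
  have hk : 0 ≤ k := by positivity
  have hlin : x / a = k * u := by simp only [u, k]; field_simp
  have hquad : x ^ 2 / (4 * V) = k * (u ^ 2 / 2) := by simp only [u, k]; field_simp; ring
  have hkey := mul_le_mul_of_nonneg_left (mul_min_le_sub_log_one_add (by positivity : 0 ≤ u)) hk
  rw [hlin, hquad, ← mul_min_of_nonneg _ _ hk]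
  linarith
end

section
/- Let $T>0$ and let $\nu$ be the measure on $\mathbb{R}\setminus\{0\}$ with density $y\mapsto \frac{1}{2y\sinh(\pi y/T)}$. Then $\nu([x,\infty)) = \int_x^\infty \frac{dy}{2y\sinh(\pi y/T)} \sim \frac{T e^{-\pi x/T}}{\pi x}$ as $x\to\infty$. -/
/-!
Write `a = π / T`. On `(x, ∞)` the density is squeezed between two exponentials: from above by
`e^{-ay} / (x (1 - e^{-2ax}))`, because `2 sinh (a y) = e^{ay} (1 - e^{-2ay})` and the second factor
increases with `y`; from below by `e^{-ay} / y ≥ e · e^{-(a + 1/x) y} / x`, equivalent to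
`y / x ≤ e^{y/x - 1}`. Integrating,
`e^{-ax} / (a x + 1) ≤ ∫_x^∞ ≤ e^{-ax} / (a x (1 - e^{-2ax}))`, and both bounds are
`∼ e^{-ax} / (a x)`.
-/

open MeasureTheory Real Filter Set Topology

noncomputable def levyAreaDensity (a y : ℝ) : ℝ := 1 / (2 * y * sinh (a * y))

section

variable {a x y : ℝ}

theorem levyAreaDensity_pos (ha : 0 < a) (hy : 0 < y) : 0 < levyAreaDensity a y := by
  have : 0 < sinh (a * y) := sinh_pos_iff.mpr (mul_pos ha hy)
  unfold levyAreaDensity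
  positivity

theorem exp_neg_mul_div_le_levyAreaDensity (ha : 0 < a) (hy : 0 < y) :
    exp (-a * y) / y ≤ levyAreaDensity a y := by
  have hsinh_pos : 0 < sinh (a * y) := sinh_pos_iff.mpr (mul_pos ha hy)
  have hsinh : 2 * sinh (a * y) ≤ exp (a * y) := by
    rw [sinh_eq]; linarith [exp_pos (-(a * y))]
  calc exp (-a * y) / y = 1 / (y * exp (a * y)) := by
        rw [neg_mul, exp_neg]; field_simp
    _ ≤ levyAreaDensity a y :=
        one_div_le_one_div_of_le (by positivity) (by nlinarith)

theorem levyAreaDensity_le (ha : 0 < a) (hx : 0 < x) (hxy : x ≤ y) :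
    levyAreaDensity a y ≤ exp (-a * y) / (x * (1 - exp (-2 * a * x))) := by
  have hy : 0 < y := hx.trans_le hxy
  have hk : exp (-2 * a * y) ≤ exp (-2 * a * x) := exp_le_exp.mpr (by nlinarith)
  have hk_pos : 0 < 1 - exp (-2 * a * x) := sub_pos.mpr (exp_lt_one_iff.mpr (by nlinarith))
  have hsinh : 2 * sinh (a * y) = exp (a * y) * (1 - exp (-2 * a * y)) := by
    rw [sinh_eq, mul_sub, ← exp_add]; ring_nf
  have hden : x * (1 - exp (-2 * a * x)) * exp (a * y) ≤ 2 * y * sinh (a * y) := by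
    rw [mul_assoc 2, mul_left_comm, hsinh]
    have := exp_pos (a * y)
    nlinarith [mul_le_mul hxy (sub_le_sub_left hk 1) hk_pos.le hy.le]
  calc levyAreaDensity a y ≤ 1 / (x * (1 - exp (-2 * a * x)) * exp (a * y)) :=
        one_div_le_one_div_of_le (by positivity) hden
    _ = exp (-a * y) / (x * (1 - exp (-2 * a * x))) := by
        rw [neg_mul a, exp_neg]; field_simp

theorem exp_one_sub_div_div_le_inv (hx : 0 < x) (hy : 0 < y) : exp (1 - y / x) / x ≤ y⁻¹ := by
  have key : y / x ≤ exp (y / x - 1) := by simpa using add_one_le_exp (y / x - 1)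
  rw [div_le_iff₀ hx, ← div_eq_inv_mul, le_div_iff₀ hy, ← neg_sub, exp_neg, inv_mul_eq_div,
    div_le_iff₀ (exp_pos _)]
  rwa [div_le_iff₀ hx, mul_comm] at key

theorem exp_one_div_mul_exp_le_levyAreaDensity (ha : 0 < a) (hx : 0 < x) (hy : 0 < y) :
    exp 1 / x * exp (-(a + x⁻¹) * y) ≤ levyAreaDensity a y :=
  calc exp 1 / x * exp (-(a + x⁻¹) * y) = exp (-a * y) * (exp (1 - y / x) / x) := by
        rw [div_mul_eq_mul_div, ← exp_add, mul_div_assoc', ← exp_add]; congr 2; ring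
    _ ≤ exp (-a * y) * y⁻¹ :=
        mul_le_mul_of_nonneg_left (exp_one_sub_div_div_le_inv hx hy) (exp_pos _).le
    _ ≤ levyAreaDensity a y := exp_neg_mul_div_le_levyAreaDensity ha hy

theorem integral_exp_neg_mul_Ioi {b : ℝ} (hb : 0 < b) (x : ℝ) :
    ∫ y in Ioi x, exp (-b * y) = exp (-b * x) / b := by
  rw [integral_exp_mul_Ioi (neg_neg_iff_pos.mpr hb), neg_div_neg_eq]

theorem integrableOn_levyAreaDensity_Ioi (ha : 0 < a) (hx : 0 < x) :
    IntegrableOn (levyAreaDensity a) (Ioi x) := by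
  have hmeas : Measurable (levyAreaDensity a) := by unfold levyAreaDensity; fun_prop
  refine ((exp_neg_integrableOn_Ioi x ha).div_const (x * (1 - exp (-2 * a * x)))).mono' ?_ ?_
  · exact hmeas.aestronglyMeasurable
  · filter_upwards [ae_restrict_mem measurableSet_Ioi] with y hy
    rw [norm_of_nonneg (levyAreaDensity_pos ha (hx.trans hy)).le]
    exact levyAreaDensity_le ha hx (le_of_lt hy)

theorem integral_levyAreaDensity_Ioi_le (ha : 0 < a) (hx : 0 < x) :
    ∫ y in Ioi x, levyAreaDensity a y ≤ exp (-a * x) / (a * x * (1 - exp (-2 * a * x))) :=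
  calc ∫ y in Ioi x, levyAreaDensity a y
      ≤ ∫ y in Ioi x, exp (-a * y) / (x * (1 - exp (-2 * a * x))) :=
        setIntegral_mono_on (integrableOn_levyAreaDensity_Ioi ha hx)
          ((exp_neg_integrableOn_Ioi x ha).div_const _) measurableSet_Ioi
          fun y hy => levyAreaDensity_le ha hx (le_of_lt hy)
    _ = exp (-a * x) / (a * x * (1 - exp (-2 * a * x))) := by
        rw [integral_div, integral_exp_neg_mul_Ioi ha, div_div]; ring

theorem le_integral_levyAreaDensity_Ioi (ha : 0 < a) (hx : 0 < x) :
    exp (-a * x) / (a * x + 1) ≤ ∫ y in Ioi x, levyAreaDensity a y := by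
  have hb : 0 < a + x⁻¹ := by positivity
  calc exp (-a * x) / (a * x + 1) = ∫ y in Ioi x, exp 1 / x * exp (-(a + x⁻¹) * y) := by
        have hexp : exp 1 * exp (-(a + x⁻¹) * x) = exp (-a * x) := by
          rw [← exp_add]; congr 1; field_simp; ring
        rw [integral_const_mul, integral_exp_neg_mul_Ioi hb, ← hexp]
        field_simp
    _ ≤ ∫ y in Ioi x, levyAreaDensity a y :=
        setIntegral_mono_on ((exp_neg_integrableOn_Ioi x hb).const_mul _)
          (integrableOn_levyAreaDensity_Ioi ha hx) measurableSet_Ioi fun y hy =>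
            exp_one_div_mul_exp_le_levyAreaDensity ha hx (hx.trans hy)

theorem tendsto_mul_exp_mul_integral_levyAreaDensity_Ioi (ha : 0 < a) :
    Tendsto (fun x => a * x * exp (a * x) * ∫ y in Ioi x, levyAreaDensity a y)
      atTop (𝓝 1) := by
  have hinv : Tendsto (fun x => (a * x)⁻¹) atTop (𝓝 0) :=
    tendsto_inv_atTop_zero.comp (tendsto_id.const_mul_atTop ha)
  have hexp : Tendsto (fun x => exp (-2 * a * x)) atTop (𝓝 0) :=
    tendsto_exp_atBot.comp (tendsto_id.const_mul_atTop_of_neg (by linarith))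
  have hlower : Tendsto (fun x => 1 / (1 + (a * x)⁻¹)) atTop (𝓝 1) := by
    simpa using (tendsto_const_nhds (x := (1 : ℝ))).add hinv |>.inv₀ (by norm_num)
  have hupper : Tendsto (fun x => 1 / (1 - exp (-2 * a * x))) atTop (𝓝 1) := by
    simpa using (tendsto_const_nhds (x := (1 : ℝ))).sub hexp |>.inv₀ (by norm_num)
  refine tendsto_of_tendsto_of_tendsto_of_le_of_le' hlower hupper ?_ ?_
  all_goals
    filter_upwards [eventually_gt_atTop 0] with x hx
    have hscale : 0 ≤ a * x * exp (a * x) := by positivity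
  · calc 1 / (1 + (a * x)⁻¹) = a * x * exp (a * x) * (exp (-a * x) / (a * x + 1)) := by
          rw [neg_mul, exp_neg]; field_simp
      _ ≤ _ := mul_le_mul_of_nonneg_left (le_integral_levyAreaDensity_Ioi ha hx) hscale
  · calc _ ≤ a * x * exp (a * x) * (exp (-a * x) / (a * x * (1 - exp (-2 * a * x)))) :=
          mul_le_mul_of_nonneg_left (integral_levyAreaDensity_Ioi_le ha hx) hscale
      _ = 1 / (1 - exp (-2 * a * x)) := by
          have : exp (-2 * a * x) < 1 := exp_lt_one_iff.mpr (by nlinarith)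
          have : 1 - exp (-2 * a * x) ≠ 0 := by linarith
          rw [neg_mul a, exp_neg]; field_simp

end

/-- Tail asymptotics of the Lévy measure of Lévy's stochastic area on `[0,T]`. -/
theorem stmt9 (T : ℝ) (hT : 0 < T) :
    Tendsto (fun x : ℝ =>
        Real.pi * x * Real.exp (Real.pi * x / T) / T
          * ∫ y in Set.Ioi x, 1 / (2 * y * Real.sinh (Real.pi * y / T)))
      atTop (nhds 1) := by
  convert tendsto_mul_exp_mul_integral_levyAreaDensity_Ioi (div_pos pi_pos hT) using 2 with x
  simp only [levyAreaDensity, div_mul_eq_mul_div]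
end
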